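/- In a tensor network with scalar output where L = con(Λ, 𝒯 ∪ {𝟙_Q}, ∅) and 𝟙_Q is a unity tensor over Q ⊆ Λ, the gradient of L with respect to 𝟙_Q equals the contraction con(Λ, 𝒯, Q), i.e., the output tensor over labels Q of the original network. In the probabilistic setting where the product of tensors in 𝒯 is a joint distribution p(Λ), this gradient equals the (unnormalized) marginal p(Q). -/

import Mathlib

/-!
Replacing the entry of `𝟙_Q` at `q` by `s` adds `(s - 1)` times the indicator of `Q = q` to the
unity tensor, so the scalar contraction is affine in `s`:
`L(s) = con(Λ, 𝒯, ∅) + (s - 1) · con(Λ, 𝒯, Q)(q)`. Its slope is the marginal.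
-/

variable {ι : Type} [Fintype ι] [DecidableEq ι]
variable {D : ι → Type} [∀ i, Fintype (D i)] [∀ i, DecidableEq (D i)]

/-- Tensor network contraction `con(Λ, 𝒯, V₀)`. -/
noncomputable def con (𝒯 : List ((∀ i, D i) → ℝ)) (V₀ : Finset ι) (x : ∀ i, D i) : ℝ :=
  ∑ y : ∀ i, D i, if ∀ i ∈ V₀, y i = x i then (𝒯.map fun T => T y).prod else 0

/-- A tensor with scope `S`, given by a table of entries, as a function of full
assignments. -/
def tensorOf (S : Finset ι) (t : (∀ j : {i // i ∈ S}, D j.1) → ℝ) : (∀ i, D i) → ℝ :=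
  fun y => t fun j => y j.1

theorem con_empty (𝒯 : List ((∀ i, D i) → ℝ)) (x : ∀ i, D i) :
    con 𝒯 ∅ x = ∑ y : ∀ i, D i, (𝒯.map fun T => T y).prod := by
  simp [con]

theorem con_cons_unity_update (Q : Finset ι) (𝒯 : List ((∀ i, D i) → ℝ)) (x : ∀ i, D i)
    (s : ℝ) :
    con (tensorOf Q (Function.update (fun _ => (1 : ℝ)) (fun j => x j.1) s) :: 𝒯) ∅ x =
      con 𝒯 ∅ x + (s - 1) * con 𝒯 Q x := by
  have hunity : ∀ y : ∀ i, D i,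
      tensorOf Q (Function.update (fun _ => (1 : ℝ)) (fun j => x j.1) s) y =
        1 + (s - 1) * if ∀ i ∈ Q, y i = x i then 1 else 0 := by
    intro y
    have hrestrict :
        ((fun j : {i // i ∈ Q} => y j.1) = fun j : {i // i ∈ Q} => x j.1) ↔
          ∀ i ∈ Q, y i = x i := by
      simp [funext_iff]
    rw [tensorOf, Function.update_apply]
    simp only [hrestrict]
    split_ifs <;> ring
  rw [con_empty, con_empty, con, Finset.mul_sum, ← Finset.sum_add_distrib]
  refine Finset.sum_congr rfl fun y _ => ?_
  simp only [List.map_cons, List.prod_cons, hunity]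
  split_ifs <;> ring

theorem hasDerivAt_con_cons_unity_update (Q : Finset ι) (𝒯 : List ((∀ i, D i) → ℝ))
    (x : ∀ i, D i) (s : ℝ) :
    HasDerivAt
      (fun s : ℝ =>
        con (tensorOf Q (Function.update (fun _ => (1 : ℝ)) (fun j => x j.1) s) :: 𝒯) ∅ x)
      (con 𝒯 Q x) s := by
  simp only [con_cons_unity_update]
  simpa using (((hasDerivAt_id s).sub_const 1).mul_const (con 𝒯 Q x)).const_add (con 𝒯 ∅ x)

theorem gradient_unity_tensor_eq_marginal_general (Q : Finset ι)
    (𝒯 : List ((∀ i, D i) → ℝ)) (x : ∀ i, D i) :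
    HasDerivAt
      (fun s : ℝ =>
        con (tensorOf Q (Function.update (fun _ => (1 : ℝ)) (fun j => x j.1) s) :: 𝒯)
          (∅ : Finset ι) x)
      (con 𝒯 Q x) 1 ∧
    con 𝒯 Q x =
      ∑ y : ∀ i, D i, if ∀ i ∈ Q, y i = x i then (𝒯.map fun T => T y).prod else 0 :=
  ⟨hasDerivAt_con_cons_unity_update Q 𝒯 x 1, rfl⟩

/-- The gradient of the scalar contraction `L = con(Λ, 𝒯 ∪ {𝟙_Q}, ∅)` with respect to
the entry of the unity tensor `𝟙_Q` at `q` (the restriction of `x` to `Q`) equals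
`con(Λ, 𝒯, Q)(q)`, which in turn is the unnormalized marginal
`Σ_{assignments of Λ∖Q, Q fixed to q} Π_{T ∈ 𝒯} T`. -/
theorem gradient_unity_tensor_eq_marginal (Q : Finset ι)
    (𝒯 : List ((∀ i, D i) → ℝ)) (hnn : ∀ T ∈ 𝒯, ∀ y, 0 ≤ T y) (x : ∀ i, D i) :
    HasDerivAt
      (fun s : ℝ =>
        con (tensorOf Q (Function.update (fun _ => (1 : ℝ)) (fun j => x j.1) s) :: 𝒯)
          (∅ : Finset ι) x)
      (con 𝒯 Q x) 1 ∧
    con 𝒯 Q x =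
      ∑ y : ∀ i, D i, if ∀ i ∈ Q, y i = x i then (𝒯.map fun T => T y).prod else 0 :=
  gradient_unity_tensor_eq_marginal_general Q 𝒯 x
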